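/- If a graph G contains the complement of C7 as a subgraph on 7 vertices, then applying a (Delta,Y)-operation to any triangle of the complement of C7 yields a graph with a spanning subgraph isomorphic to the Wagner graph V8. -/

import Mathlib

namespace TwwPaper

open Finset

/-! ### Twin-width via contraction (partition-merge) sequences -/

/-- Two parts `P`, `Q` are *pure* (homogeneous) in `G`: the graph is either complete or empty
between them.  In the trigraph of a partition, a non-pure pair of parts is joined by a red edge. -/
def Pure {V : Type*} (G : SimpleGraph V) (P Q : Finset V) : Prop :=
  (∀ x ∈ P, ∀ y ∈ Q, G.Adj x y) ∨ (∀ x ∈ P, ∀ y ∈ Q, ¬ G.Adj x y)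

/-- The red degree of a part `P` in the partition `PP`: the number of other parts that are
not pure with respect to `P`. -/
noncomputable def redDeg {V : Type*} (G : SimpleGraph V) (PP : Finset (Finset V)) (P : Finset V) : ℕ :=
  {Q | Q ∈ PP ∧ Q ≠ P ∧ ¬ Pure G P Q}.ncard

/-- `QQ` is obtained from `PP` by merging (contracting) two parts. -/
def Merge {V : Type*} [DecidableEq V] (PP QQ : Finset (Finset V)) : Prop :=
  ∃ A ∈ PP, ∃ B ∈ PP, A ≠ B ∧ QQ = insert (A ∪ B) ((PP.erase A).erase B)

/-- One contraction step keeping every red degree at most `d`. -/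
def Step {V : Type*} [DecidableEq V] (G : SimpleGraph V) (d : ℕ) (PP QQ : Finset (Finset V)) :
    Prop :=
  Merge PP QQ ∧ ∀ P ∈ QQ, redDeg G QQ P ≤ d

/-- `G` admits a `d`-contraction sequence: starting from the partition into singletons one can
merge two parts at a time, always keeping all red degrees at most `d`, until one part remains. -/
def TwwLE {V : Type*} [Fintype V] [DecidableEq V] (G : SimpleGraph V) (d : ℕ) : Prop :=
  Relation.ReflTransGen (Step G d)
    (Finset.univ.image fun v => ({v} : Finset V)) {Finset.univ}

/-- The twin-width of a finite simple graph. -/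
noncomputable def tww {V : Type*} [Fintype V] [DecidableEq V] (G : SimpleGraph V) : ℕ :=
  sInf {d | TwwLE G d}

/-! ### Minors, separators, subgraph containment -/

/-- `H` is a minor of `G`: there is a minor model, i.e. pairwise disjoint nonempty connected
branch sets, one for each vertex of `H`, with an edge of `G` between the branch sets of any two
adjacent vertices of `H`. -/
def IsMinor {α β : Type*} (H : SimpleGraph α) (G : SimpleGraph β) : Prop :=
  ∃ f : α → Set β,
    (∀ a, (f a).Nonempty) ∧
    (∀ a, (G.induce (f a)).Connected) ∧
    (∀ a b, a ≠ b → Disjoint (f a) (f b)) ∧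
    ∀ a b, H.Adj a b → ∃ x ∈ f a, ∃ y ∈ f b, G.Adj x y

/-- `S` is a separator of `G` : deleting `S` leaves a nonempty disconnected graph. -/
def Sep {α : Type*} (G : SimpleGraph α) (S : Set α) : Prop :=
  (Sᶜ : Set α).Nonempty ∧ ¬ (G.induce Sᶜ).Preconnected

/-- `G` contains `F` as a (not necessarily induced) subgraph. -/
def ContainsSubgraph {α β : Type*} (G : SimpleGraph β) (F : SimpleGraph α) : Prop :=
  ∃ f : α → β, Function.Injective f ∧ ∀ a b, F.Adj a b → G.Adj (f a) (f b)

/-- `G` is internally 4-connected. -/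
def Internally4Connected {α : Type*} [Fintype α] (G : SimpleGraph α) : Prop :=
  5 ≤ Fintype.card α ∧
  (∀ S : Set α, S.ncard < 3 → ¬ Sep G S) ∧
  ∀ S : Set α, S.ncard = 3 → Sep G S →
    (∀ a ∈ S, ∀ b ∈ S, ¬ G.Adj a b) ∧ ∃ v ∉ S, G.neighborSet v = S

/-! ### The concrete graphs -/

/-- `K₆` minus one edge. -/
def K6minus : SimpleGraph (Fin 6) where
  Adj a b := a ≠ b ∧ ¬(({a, b} : Finset (Fin 6)) = {0, 1})
  symm := by
    constructor
    rintro a b ⟨h1, h2⟩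
    exact ⟨h1.symm, by rwa [Finset.pair_comm]⟩
  loopless := ⟨fun a h => h.1 rfl⟩

/-- The complement of the 7-cycle. -/
def C7c : SimpleGraph (Fin 7) := (SimpleGraph.cycleGraph 7)ᶜ

/-- Join of two graphs. -/
def joinG {α β : Type*} (G : SimpleGraph α) (H : SimpleGraph β) : SimpleGraph (α ⊕ β) where
  Adj x y :=
    match x, y with
    | Sum.inl a, Sum.inl b => G.Adj a b
    | Sum.inr a, Sum.inr b => H.Adj a b
    | _, _ => True
  symm := by
    constructor
    rintro (a | a) (b | b) h
    · exact G.adj_symm h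
    · exact trivial
    · exact trivial
    · exact H.adj_symm h
  loopless := by
    constructor
    rintro (a | a) h
    · exact G.irrefl h
    · exact H.irrefl h

/-- The join of `C₅` with the complement of `K₂` (two isolated vertices). -/
def C5K2c : SimpleGraph (Fin 5 ⊕ Fin 2) :=
  joinG (SimpleGraph.cycleGraph 5) (⊥ : SimpleGraph (Fin 2))

/-- The part of a vertex of `K_{3,1,3}`: `{0,1,2}`, `{3}`, `{4,5,6}`. -/
def triPart : Fin 7 → ℕ := fun a => if a.val < 3 then 0 else if a.val = 3 then 1 else 2

/-- `K_{3,1̂,3}`: the complete tripartite graph `K_{3,1,3}` minus one edge from the middle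
vertex `3` to each of the two size-3 parts (the edges `{0,3}` and `{3,4}`). -/
def K313hat : SimpleGraph (Fin 7) where
  Adj a b := triPart a ≠ triPart b ∧ ¬(({a, b} : Finset (Fin 7)) = {0, 3}) ∧
    ¬(({a, b} : Finset (Fin 7)) = {3, 4})
  symm := by
    constructor
    rintro a b ⟨h1, h2, h3⟩
    refine ⟨h1.symm, ?_, ?_⟩ <;> rwa [Finset.pair_comm]
  loopless := ⟨fun a h => h.1 rfl⟩

/-- The cube graph `Q₃`. -/
def Q3 : SimpleGraph (Fin 2 × Fin 2 × Fin 2) where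
  Adj x y := (x.1 ≠ y.1 ∧ x.2 = y.2) ∨ (x.1 = y.1 ∧ x.2.1 ≠ y.2.1 ∧ x.2.2 = y.2.2) ∨
    (x.1 = y.1 ∧ x.2.1 = y.2.1 ∧ x.2.2 ≠ y.2.2)
  symm := by
    constructor
    rintro x y (⟨h1, h2⟩ | ⟨h1, h2, h3⟩ | ⟨h1, h2, h3⟩)
    · exact Or.inl ⟨h1.symm, h2.symm⟩
    · exact Or.inr (Or.inl ⟨h1.symm, h2.symm, h3.symm⟩)
    · exact Or.inr (Or.inr ⟨h1.symm, h2.symm, h3.symm⟩)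
  loopless := by
    constructor
    rintro x (⟨h, -⟩ | ⟨-, h, -⟩ | ⟨-, -, h⟩) <;> exact h rfl

/-- The Wagner graph `V₈`: the 8-cycle plus the four main diagonals. -/
def V8 : SimpleGraph (Fin 8) where
  Adj a b := a ≠ b ∧ (b = a + 1 ∨ a = b + 1 ∨ b = a + 4)
  symm := by
    constructor
    rintro a b ⟨h, h1 | h1 | h1⟩
    · exact ⟨h.symm, Or.inr (Or.inl h1)⟩
    · exact ⟨h.symm, Or.inl h1⟩
    · refine ⟨h.symm, Or.inr (Or.inr ?_)⟩
      subst h1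
      have h4 : (4 : Fin 8) + 4 = 0 := by decide
      rw [add_assoc, h4, add_zero]
  loopless := by constructor; rintro a ⟨h, -⟩; exact h rfl

/-- `K₆` minus a perfect matching (`K₆^≡`), i.e. the octahedron `K_{2,2,2}`. -/
def K6mm3 : SimpleGraph (Fin 6) where
  Adj a b := a.val % 3 ≠ b.val % 3
  symm := ⟨fun _ _ h => h.symm⟩
  loopless := ⟨fun _ h => h rfl⟩

/-- `K₆` minus a matching of size two (`K₆^=`). -/
def K6mm2 : SimpleGraph (Fin 6) where
  Adj a b := a ≠ b ∧ ¬(({a, b} : Finset (Fin 6)) = {0, 3}) ∧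
    ¬(({a, b} : Finset (Fin 6)) = {1, 4})
  symm := by
    constructor
    rintro a b ⟨h1, h2, h3⟩
    refine ⟨h1.symm, ?_, ?_⟩ <;> rwa [Finset.pair_comm]
  loopless := ⟨fun a h => h.1 rfl⟩

/-- The join of the complement of `C₆` with a single vertex. -/
def C6cK1 : SimpleGraph (Fin 6 ⊕ Fin 1) :=
  joinG ((SimpleGraph.cycleGraph 6)ᶜ) (⊥ : SimpleGraph (Fin 1))

/-- A perfect matching graph on `Fin m` (`m` even): `2i` is matched to `2i+1`. -/
def matchingGraph (m : ℕ) : SimpleGraph (Fin m) where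
  Adj a b := a ≠ b ∧ a.val / 2 = b.val / 2
  symm := ⟨fun _ _ h => ⟨h.1.symm, h.2.symm⟩⟩
  loopless := ⟨fun _ h => h.1 rfl⟩

/-- The `m × n` grid graph. -/
def gridGraph (m n : ℕ) : SimpleGraph (Fin m × Fin n) where
  Adj p q := (p.1 = q.1 ∧ (p.2.val + 1 = q.2.val ∨ q.2.val + 1 = p.2.val)) ∨
    (p.2 = q.2 ∧ (p.1.val + 1 = q.1.val ∨ q.1.val + 1 = p.1.val))
  symm := by
    constructor
    rintro p q (⟨h1, h2⟩ | ⟨h1, h2⟩)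
    · exact Or.inl ⟨h1.symm, h2.symm⟩
    · exact Or.inr ⟨h1.symm, h2.symm⟩
  loopless := by constructor; rintro p (⟨-, h | h⟩ | ⟨-, h | h⟩) <;> omega

/-! ### `(Δ,Y)`-operation -/

/-- The `(Δ,Y)`-operation on the triangle `{x,y,z}` of `G`: delete the edges of the triangle
and add a new vertex (`none`) adjacent exactly to `x`, `y`, `z`. -/
def deltaY {α : Type*} (G : SimpleGraph α) (x y z : α) : SimpleGraph (Option α) where
  Adj a b :=
    match a, b with
    | some a, some b => G.Adj a b ∧ ¬((a = x ∨ a = y ∨ a = z) ∧ (b = x ∨ b = y ∨ b = z))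
    | some a, none => a = x ∨ a = y ∨ a = z
    | none, some b => b = x ∨ b = y ∨ b = z
    | none, none => False
  symm := by
    constructor
    rintro (_ | a) (_ | b) h
    · exact h.elim
    · exact h
    · exact h
    · exact ⟨h.1.symm, fun hc => h.2 ⟨hc.2, hc.1⟩⟩
  loopless := by
    constructor
    rintro (_ | a) h
    · exact h
    · exact G.irrefl h.1

/-- `G` has a spanning subgraph isomorphic to a member of
`𝓕₃ = {K₆⁻, C₇ᶜ, C₅ + K₂ᶜ, K_{3,1̂,3}, Q₃, V₈}`. -/
def HasSpanningF3 {α : Type*} (G : SimpleGraph α) : Prop :=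
  ∃ H : SimpleGraph α, H ≤ G ∧
    (Nonempty (H ≃g K6minus) ∨ Nonempty (H ≃g C7c) ∨ Nonempty (H ≃g C5K2c) ∨
      Nonempty (H ≃g K313hat) ∨ Nonempty (H ≃g Q3) ∨ Nonempty (H ≃g V8))

/-- `G` has a minor in `𝓕₃`. -/
def HasF3Minor {α : Type*} (G : SimpleGraph α) : Prop :=
  IsMinor K6minus G ∨ IsMinor C7c G ∨ IsMinor C5K2c G ∨ IsMinor K313hat G ∨
    IsMinor Q3 G ∨ IsMinor V8 G

/-! ### Subdivisions -/

/-- Vertices of the subdivision of `G` in which the edge `ab` (with `a < b`) receives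
`ℓ a b` internal (subdivision) vertices: the original vertices plus, for each oriented edge,
`ℓ a b` new vertices. -/
def SubdivVert {α : Type*} [LT α] (G : SimpleGraph α) (ℓ : α → α → ℕ) : Type _ :=
  α ⊕ Σ e : {p : α × α // p.1 < p.2 ∧ G.Adj p.1 p.2}, Fin (ℓ e.1.1 e.1.2)

noncomputable instance SubdivVert.instFintype {α : Type*} [LT α] [Fintype α]
    (G : SimpleGraph α) (ℓ : α → α → ℕ) : Fintype (SubdivVert G ℓ) := by
  classical
  unfold SubdivVert
  infer_instance

noncomputable instance SubdivVert.instDecidableEq {α : Type*} [LT α] [DecidableEq α]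
    (G : SimpleGraph α) (ℓ : α → α → ℕ) : DecidableEq (SubdivVert G ℓ) := by
  classical
  unfold SubdivVert
  infer_instance

/-- The subdivision of `G` in which each edge `ab` (`a < b`) is replaced by a path with
`ℓ a b` internal vertices (so of length `ℓ a b + 1`); an edge with `ℓ a b = 0` stays an edge. -/
def Subdiv {α : Type*} [LT α] (G : SimpleGraph α) (ℓ : α → α → ℕ) :
    SimpleGraph (SubdivVert G ℓ) where
  Adj x y :=
    match x, y with
    | Sum.inl a, Sum.inl b =>
        G.Adj a b ∧ ((a < b ∧ ℓ a b = 0) ∨ (b < a ∧ ℓ b a = 0))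
    | Sum.inl a, Sum.inr ei =>
        (a = ei.1.1.1 ∧ (ei.2 : ℕ) = 0) ∨ (a = ei.1.1.2 ∧ (ei.2 : ℕ) + 1 = ℓ ei.1.1.1 ei.1.1.2)
    | Sum.inr ei, Sum.inl a =>
        (a = ei.1.1.1 ∧ (ei.2 : ℕ) = 0) ∨ (a = ei.1.1.2 ∧ (ei.2 : ℕ) + 1 = ℓ ei.1.1.1 ei.1.1.2)
    | Sum.inr ei, Sum.inr ej =>
        ei.1 = ej.1 ∧ ((ei.2 : ℕ) + 1 = (ej.2 : ℕ) ∨ (ej.2 : ℕ) + 1 = (ei.2 : ℕ))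
  symm := by
    constructor
    rintro (a | ei) (b | ej) h
    · exact ⟨h.1.symm, h.2.symm⟩
    · exact h
    · exact h
    · exact ⟨h.1.symm, h.2.symm⟩
  loopless := by
    constructor
    rintro (a | ei) h
    · exact G.irrefl h.1
    · rcases h.2 with h' | h' <;> omega

/-- Lexicographic order on the vertex set of a grid, used to orient its edges. -/
def lexLT {m n : ℕ} : LT (Fin m × Fin n) :=
  ⟨fun p q => p.1 < q.1 ∨ (p.1 = q.1 ∧ p.2 < q.2)⟩


/-! All triangles of `C₇ᶜ` are rotations of `{0, 2, 4}`, and an isomorphism of graphs carries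
`(Δ,Y)`-operations along, so it suffices to treat that one triangle. There the Hamiltonian cycle
`0, 3, 6, 2, 5, 1, 4` of `C₇ᶜ` begins and ends in the triangle, so it closes up through the new
vertex into an 8-cycle whose main diagonals are edges of the `(Δ,Y)`-graph. -/

theorem _root_.SimpleGraph.exists_le_iso_of_bijective_hom {α β : Type*} {H : SimpleGraph α}
    {G : SimpleGraph β} (f : H →g G) (hf : Function.Bijective f) :
    ∃ H' : SimpleGraph β, H' ≤ G ∧ Nonempty (H' ≃g H) := by
  let e : α ≃ β := Equiv.ofBijective f hf
  refine ⟨H.map e.toEmbedding, ?_, ⟨(SimpleGraph.Iso.map e H).symm⟩⟩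
  rw [SimpleGraph.map_le_iff_le_comap]
  exact fun _ _ h => f.map_adj h

theorem deltaY_congr {α : Type*} [DecidableEq α] (G : SimpleGraph α) {x y z x' y' z' : α}
    (h : ({x, y, z} : Finset α) = {x', y', z'}) : deltaY G x y z = deltaY G x' y' z' := by
  have hmem : ∀ a, (a = x ∨ a = y ∨ a = z) ↔ (a = x' ∨ a = y' ∨ a = z') := fun a => by
    simpa using congrArg (a ∈ ·) h
  ext (_ | a) (_ | b) <;> simp only [deltaY, hmem]

def _root_.SimpleGraph.Iso.deltaY {α β : Type*} {G : SimpleGraph α} {G' : SimpleGraph β}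
    (σ : G ≃g G') (x y z : α) : deltaY G x y z ≃g deltaY G' (σ x) (σ y) (σ z) where
  toEquiv := Equiv.optionCongr σ.toEquiv
  map_rel_iff' := by
    rintro (_ | a) (_ | b) <;> simp [_root_.TwwPaper.deltaY, σ.injective.eq_iff, σ.map_adj_iff]

instance deltaY.instDecidableRel {α : Type*} [DecidableEq α] (G : SimpleGraph α)
    [DecidableRel G.Adj] (x y z : α) : DecidableRel (deltaY G x y z).Adj
  | some _, some _ => instDecidableAnd
  | some _, none => instDecidableOr
  | none, some _ => instDecidableOr
  | none, none => instDecidableFalse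

instance C7c.instDecidableRel : DecidableRel C7c.Adj :=
  inferInstanceAs (DecidableRel (SimpleGraph.cycleGraph 7)ᶜ.Adj)

instance V8.instDecidableRel : DecidableRel V8.Adj :=
  fun _ _ => inferInstanceAs (Decidable (_ ∧ _))

def C7c.rotate (t : Fin 7) : C7c ≃g C7c where
  toEquiv := Equiv.addLeft t
  map_rel_iff' {a b} := by
    simp only [C7c, SimpleGraph.cycleGraph_eq_circulantGraph, SimpleGraph.compl_adj,
      Equiv.coe_addLeft, add_comm t, SimpleGraph.circulantGraph_adj_translate, ne_eq,
      add_left_inj]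

theorem C7c.exists_aut_image_eq_of_triangle {x y z : Fin 7} (hxy : C7c.Adj x y)
    (hyz : C7c.Adj y z) (hxz : C7c.Adj x z) :
    ∃ σ : C7c ≃g C7c, ({x, y, z} : Finset (Fin 7)) = {σ 0, σ 2, σ 4} := by
  have : ∃ t : Fin 7, ({x, y, z} : Finset (Fin 7)) = {t, t + 2, t + 4} := by
    revert x y z
    decide
  obtain ⟨t, ht⟩ := this
  exact ⟨C7c.rotate t, by simpa [C7c.rotate] using ht⟩

def wagnerHom : V8 →g deltaY C7c 0 2 4 where
  toFun := Fin.lastCases none fun i => some (3 * i)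
  map_rel' := by intro a b; revert a b; decide

theorem wagnerHom_bijective : Function.Bijective wagnerHom := by decide

theorem deltaY_C7c_spanning_V8_general (x y z : Fin 7)
    (hxy : C7c.Adj x y) (hyz : C7c.Adj y z) (hxz : C7c.Adj x z) :
    ∃ H : SimpleGraph (Option (Fin 7)), H ≤ deltaY C7c x y z ∧ Nonempty (H ≃g V8) := by
  obtain ⟨σ, hσ⟩ := C7c.exists_aut_image_eq_of_triangle hxy hyz hxz
  rw [deltaY_congr C7c hσ]
  exact SimpleGraph.exists_le_iso_of_bijective_hom ((σ.deltaY 0 2 4).toHom.comp wagnerHom)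
    ((σ.deltaY 0 2 4).bijective.comp wagnerHom_bijective)

/-- If a graph `G` contains the complement of `C₇` as a subgraph, then
applying a `(Δ,Y)`-operation to any triangle of the complement of `C₇` yields a graph with a
spanning subgraph isomorphic to the Wagner graph `V₈`. -/
theorem deltaY_C7c_spanning_V8 {V : Type*} [Fintype V] [DecidableEq V] (G : SimpleGraph V)
    (hG : ContainsSubgraph G C7c) (x y z : Fin 7)
    (hxy : C7c.Adj x y) (hyz : C7c.Adj y z) (hxz : C7c.Adj x z) :
    ∃ H : SimpleGraph (Option (Fin 7)), H ≤ deltaY C7c x y z ∧ Nonempty (H ≃g V8) :=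
  deltaY_C7c_spanning_V8_general x y z hxy hyz hxz

end TwwPaper
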